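/- arXiv:math/9812069 — 3 statements merged into one kernel-verified Lean document; each statement's English description precedes it below -/
import Mathlib

section
/- Let K be a field, let a, b ∈ SL(2,K) satisfy tr a = tr b, and let w be any element of the free group on two generators x, y. Then tr w(a,b) = tr w(b,a). -/
open Matrix MatrixGroups

namespace TraceSwapAux

variable {K : Type} [Field K]

/-- Trace of an element of `SL(2,K)`, as a matrix. -/
def tr (g : SL(2, K)) : K := Matrix.trace (g : Matrix (Fin 2) (Fin 2) K)

lemma adj2 (M : Matrix (Fin 2) (Fin 2) K) :
    M.adjugate = Matrix.trace M • (1 : Matrix (Fin 2) (Fin 2) K) - M := by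
  rw [Matrix.adjugate_fin_two]
  ext i j
  fin_cases i <;> fin_cases j <;>
    simp [Matrix.trace_fin_two, Matrix.one_apply]

lemma coe_inv' (g : SL(2, K)) :
    ((g⁻¹ : SL(2,K)) : Matrix (Fin 2) (Fin 2) K)
      = tr g • (1 : Matrix (Fin 2) (Fin 2) K) - (g : Matrix (Fin 2) (Fin 2) K) := by
  rw [Matrix.SpecialLinearGroup.coe_inv, adj2]; rfl

lemma tr_one : tr (1 : SL(2,K)) = 2 := by
  simp [tr, Matrix.trace_one]

lemma tr_inv (g : SL(2,K)) : tr g⁻¹ = tr g := by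
  show Matrix.trace _ = _
  rw [coe_inv']
  simp [Matrix.trace_smul, Matrix.trace_one, tr, smul_eq_mul]
  ring

lemma tr_mul_comm (g h : SL(2,K)) : tr (g * h) = tr (h * g) := by
  show Matrix.trace _ = Matrix.trace _
  rw [Matrix.SpecialLinearGroup.coe_mul, Matrix.SpecialLinearGroup.coe_mul,
    Matrix.trace_mul_comm]

lemma tr_mul_inv (g h : SL(2,K)) : tr (g * h⁻¹) = tr g * tr h - tr (g * h) := by
  show Matrix.trace _ = _
  rw [Matrix.SpecialLinearGroup.coe_mul, coe_inv', Matrix.mul_sub, Matrix.mul_smul,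
    mul_one, Matrix.trace_sub, Matrix.trace_smul]
  show tr h • tr g - tr (g*h) = _
  rw [smul_eq_mul]; ring

lemma coe_sq (g : SL(2,K)) :
    ((g * g : SL(2,K)) : Matrix (Fin 2) (Fin 2) K)
      = tr g • (g : Matrix (Fin 2) (Fin 2) K) - 1 := by
  have h : ((g * g⁻¹ : SL(2,K)) : Matrix (Fin 2) (Fin 2) K) = 1 := by
    rw [mul_inv_cancel]; simp
  rw [Matrix.SpecialLinearGroup.coe_mul, coe_inv', Matrix.mul_sub, Matrix.mul_smul,
    mul_one] at h
  rw [Matrix.SpecialLinearGroup.coe_mul]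
  rw [sub_eq_iff_eq_add] at h
  rw [h]; abel

lemma tr_sq (g X : SL(2,K)) : tr (g * (g * X)) = tr g * tr (g * X) - tr X := by
  show Matrix.trace _ = _
  rw [show g * (g * X) = (g * g) * X by group, Matrix.SpecialLinearGroup.coe_mul, coe_sq,
    Matrix.sub_mul, one_mul, Matrix.smul_mul, Matrix.trace_sub, Matrix.trace_smul]
  rw [← Matrix.SpecialLinearGroup.coe_mul]
  show tr g • tr (g * X) - tr X = _
  rw [smul_eq_mul]

/-- evaluation of a letter -/
def lv (a b : SL(2,K)) (p : Fin 2 × Bool) : SL(2,K) :=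
  cond p.2 (![a,b] p.1) (![a,b] p.1)⁻¹

/-- evaluation of a word (list of letters) -/
def P (a b : SL(2,K)) (L : List (Fin 2 × Bool)) : SL(2,K) := (L.map (lv a b)).prod

lemma P_nil (a b : SL(2,K)) : P a b [] = 1 := rfl

lemma P_cons (a b : SL(2,K)) (p : Fin 2 × Bool) (L : List (Fin 2 × Bool)) :
    P a b (p :: L) = lv a b p * P a b L := by simp [P]

lemma P_append (a b : SL(2,K)) (L1 L2 : List (Fin 2 × Bool)) :
    P a b (L1 ++ L2) = P a b L1 * P a b L2 := by simp [P]

lemma tr_lv (a b : SL(2,K)) (p : Fin 2 × Bool) : tr (lv a b p) = ![tr a, tr b] p.1 := by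
  obtain ⟨i, s⟩ := p
  have hi : i = 0 ∨ i = 1 := by omega
  cases s <;> rcases hi with rfl | rfl <;> simp [lv, tr_inv]

def invL (L : List (Fin 2 × Bool)) : List (Fin 2 × Bool) :=
  (L.map (fun p => (p.1, !p.2))).reverse

lemma invL_length (L : List (Fin 2 × Bool)) : (invL L).length = L.length := by simp [invL]

lemma lv_not (a b : SL(2,K)) (p : Fin 2 × Bool) : lv a b (p.1, !p.2) = (lv a b p)⁻¹ := by
  obtain ⟨i, s⟩ := p; cases s <;> simp [lv]

lemma invL_cons (p : Fin 2 × Bool) (L : List (Fin 2 × Bool)) :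
    invL (p :: L) = invL L ++ [(p.1, !p.2)] := by simp [invL]

lemma P_invL (a b : SL(2,K)) (L : List (Fin 2 × Bool)) : P a b (invL L) = (P a b L)⁻¹ := by
  induction L with
  | nil => simp [invL, P]
  | cons p L ih =>
    rw [invL_cons, P_append, ih, P_cons, P_nil, mul_one, lv_not, P_cons, _root_.mul_inv_rev]

/-- The key predicate: the trace of the word evaluated at any pair `(a,b)` is a fixed
function of `tr a`, `tr b`, `tr (a*b)`. -/
def Good (K : Type) [Field K] (L : List (Fin 2 × Bool)) : Prop :=
  ∃ f : K → K → K → K, ∀ a b : SL(2,K), tr (P a b L) = f (tr a) (tr b) (tr (a*b))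

lemma good_congr {L L' : List (Fin 2 × Bool)}
    (h : ∀ a b : SL(2,K), tr (P a b L) = tr (P a b L')) (hg : Good K L') : Good K L := by
  obtain ⟨f, hf⟩ := hg
  exact ⟨f, fun a b => (h a b).trans (hf a b)⟩

lemma good_rot (L1 L2 : List (Fin 2 × Bool)) (h : Good K (L1 ++ L2)) : Good K (L2 ++ L1) := by
  apply good_congr (L' := L1 ++ L2) _ h
  intro a b
  rw [P_append, P_append, tr_mul_comm]

lemma good_nil : Good K ([] : List (Fin 2 × Bool)) :=
  ⟨fun _ _ _ => 2, fun a b => by rw [P_nil, tr_one]⟩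

lemma good_single (p : Fin 2 × Bool) : Good K [p] := by
  refine ⟨fun x y _ => ![x, y] p.1, fun a b => ?_⟩
  rw [show P a b [p] = lv a b p * 1 from P_cons a b p [], mul_one, tr_lv]

lemma good_exch' {L1 L2 : List (Fin 2 × Bool)} (h1 : Good K L1) (h2 : Good K L2)
    (h3 : Good K (L1 ++ invL L2)) : Good K (L1 ++ L2) := by
  obtain ⟨f1, hf1⟩ := h1
  obtain ⟨f2, hf2⟩ := h2
  obtain ⟨f3, hf3⟩ := h3
  refine ⟨fun x y z => f1 x y z * f2 x y z - f3 x y z, fun a b => ?_⟩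
  have key : tr (P a b L1 * P a b L2)
      = tr (P a b L1) * tr (P a b L2) - tr (P a b L1 * (P a b L2)⁻¹) := by
    have h := tr_mul_inv (P a b L1) (P a b L2); linear_combination h
  rw [P_append, key, hf1, hf2, ← P_invL, ← P_append, hf3]

lemma good_sq (p : Fin 2 × Bool) (C : List (Fin 2 × Bool))
    (IH : ∀ L' : List (Fin 2 × Bool), L'.length ≤ C.length + 1 → Good K L') :
    Good K (p :: p :: C) := by
  obtain ⟨f1, hf1⟩ := IH (p :: C) (by simp)
  obtain ⟨f2, hf2⟩ := IH C (Nat.le_succ _)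
  refine ⟨fun x y z => ![x, y] p.1 * f1 x y z - f2 x y z, fun a b => ?_⟩
  rw [P_cons, P_cons a b p C, tr_sq, ← P_cons a b p C, tr_lv, hf1, hf2]

lemma good01 (s t : Bool) : Good K [((0 : Fin 2), s), ((1 : Fin 2), t)] := by
  have hP : ∀ a b : SL(2,K), P a b [((0 : Fin 2), s), ((1 : Fin 2), t)]
      = lv a b (0, s) * lv a b (1, t) := by
    intro a b
    rw [P_cons, P_cons, P_nil, mul_one]
  cases s <;> cases t
  · -- a⁻¹ * b⁻¹
    refine ⟨fun _ _ z => z, fun a b => ?_⟩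
    rw [hP]
    show tr (a⁻¹ * b⁻¹) = _
    rw [show a⁻¹ * b⁻¹ = (b * a)⁻¹ by group, tr_inv, tr_mul_comm]
  · -- a⁻¹ * b
    refine ⟨fun x y z => y * x - z, fun a b => ?_⟩
    rw [hP]
    show tr (a⁻¹ * b) = _
    rw [tr_mul_comm, tr_mul_inv, tr_mul_comm b a]
  · -- a * b⁻¹
    refine ⟨fun x y z => x * y - z, fun a b => ?_⟩
    rw [hP]
    show tr (a * b⁻¹) = _
    rw [tr_mul_inv]
  · -- a * b
    refine ⟨fun _ _ z => z, fun a b => ?_⟩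
    rw [hP]
    show tr (a * b) = _
    rfl

lemma good_pair (p q : Fin 2 × Bool) : Good K [p, q] := by
  obtain ⟨i, s⟩ := p
  obtain ⟨j, t⟩ := q
  by_cases hij : i = j
  · subst hij
    by_cases hst : s = t
    · subst hst
      exact good_sq (i, s) [] (fun L' hL' => by
        match L', hL' with
        | [], _ => exact good_nil
        | [x], _ => exact good_single x
        | x :: y :: t, h => simp at h)
    · have ht : t = !s := by cases s <;> cases t <;> simp_all
      subst ht
      refine ⟨fun _ _ _ => 2, fun a b => ?_⟩
      rw [P_cons, P_cons, P_nil, mul_one,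
        show lv a b (i, !s) = (lv a b (i, s))⁻¹ from lv_not a b (i, s),
        mul_inv_cancel, tr_one]
  · have hcase : (i = 0 ∧ j = 1) ∨ (i = 1 ∧ j = 0) := by omega
    rcases hcase with ⟨rfl, rfl⟩ | ⟨rfl, rfl⟩
    · exact good01 s t
    · exact good_rot [((0:Fin 2), t)] [((1:Fin 2), s)] (good01 t s)

lemma good_mixed (i : Fin 2) (s : Bool) (A B : List (Fin 2 × Bool))
    (IH : ∀ L' : List (Fin 2 × Bool), L'.length < A.length + B.length + 2 → Good K L') :
    Good K ((i, s) :: (A ++ (i, !s) :: B)) := by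
  have hu : Good K ((i, s) :: A) := IH _ (by simp)
  have hv : Good K ((i, !s) :: B) := IH _ (by simp)
  have hx : Good K (((i, s) :: A) ++ invL ((i, !s) :: B)) := by
    rw [invL_cons, Bool.not_not]
    rw [show ((i, s) :: A) ++ (invL B ++ [(i, s)]) = ((i, s) :: A ++ invL B) ++ [(i, s)] by
      simp]
    apply good_rot
    rw [show [(i, s)] ++ ((i, s) :: A ++ invL B) = (i, s) :: (i, s) :: (A ++ invL B) by simp]
    apply good_sq
    intro L' hL'
    apply IH
    simp [invL_length] at hL' ⊢
    omega
  have := good_exch' hu hv hx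
  rwa [show ((i, s) :: A) ++ ((i, !s) :: B) = (i, s) :: (A ++ (i, !s) :: B) by simp] at this

/-- `rep p q k` is the word `(pq)^k`. -/
def rep (p q : Fin 2 × Bool) : ℕ → List (Fin 2 × Bool)
  | 0 => []
  | k + 1 => p :: q :: rep p q k

lemma P_rep (a b : SL(2,K)) (p q : Fin 2 × Bool) (k : ℕ) :
    P a b (rep p q k) = (P a b [p, q]) ^ k := by
  induction k with
  | zero => simp [rep, P_nil]
  | succ k ih =>
    rw [show rep p q (k + 1) = [p, q] ++ rep p q k from rfl, P_append, ih, pow_succ']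

lemma good_rep (p q : Fin 2 × Bool) : ∀ k : ℕ, Good K (rep p q k)
  | 0 => good_nil
  | 1 => by
    rw [show rep p q 1 = [p, q] from rfl]
    exact good_pair p q
  | (k + 2) => by
    rw [show rep p q (k + 2) = [p, q] ++ rep p q (k + 1) from rfl]
    apply good_exch' (good_pair p q) (good_rep p q (k + 1))
    apply good_congr (L' := rep p q k) _ (good_rep p q k)
    intro a b
    rw [P_append, P_invL, P_rep, P_rep]
    rw [show P a b [p, q] * ((P a b [p, q]) ^ (k + 1))⁻¹ = ((P a b [p, q]) ^ k)⁻¹ by group]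
    rw [tr_inv]

lemma chain_or {α : Type*} (R : α → α → Prop) :
    ∀ L : List α, List.Chain' R L ∨ ∃ A x y B, L = A ++ x :: y :: B ∧ ¬ R x y := by
  intro L
  induction L with
  | nil => left; exact List.isChain_nil
  | cons x T ih =>
    cases T with
    | nil => left; exact List.isChain_singleton _
    | cons y T' =>
      by_cases h : R x y
      · rcases ih with hc | ⟨A, u, v, B, heq, hn⟩
        · left; exact List.isChain_cons_cons.2 ⟨h, hc⟩
        · right; exact ⟨x :: A, u, v, B, by rw [heq]; rfl, hn⟩
      · right; exact ⟨[], x, y, T', rfl, h⟩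

lemma alt_struct : ∀ (n : ℕ) (L : List (Fin 2 × Bool)) (p q : Fin 2 × Bool),
    L.length ≤ n → p.1 ≠ q.1 → (∀ r ∈ L, r = p ∨ r = q) →
    List.Chain' (fun u v => u.1 ≠ v.1) L →
    L.head? = some p → L.getLast? = some q → ∃ k, L = rep p q k := by
  intro n
  induction n with
  | zero =>
    intro L p q hn _ _ _ hh _
    rw [List.length_eq_zero_iff.mp (Nat.le_zero.mp hn)] at hh
    simp at hh
  | succ n IHn =>
    intro L p q hn hpq hmem hch hh hl
    cases L with
    | nil => simp at hh
    | cons p' T =>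
      have hp' : p' = p := by simpa using hh
      rw [hp'] at hch hl hmem ⊢
      cases T with
      | nil =>
        exfalso
        have hq : p = q := by simpa using hl
        exact hpq (by rw [hq])
      | cons r T' =>
        have hr : r = q := by
          rcases hmem r (by simp) with h | h
          · exact absurd (by rw [h]) (List.isChain_cons_cons.mp hch).1
          · exact h
        rw [hr] at hch hl hmem ⊢
        cases T' with
        | nil => exact ⟨1, rfl⟩
        | cons r' T'' =>
          have hr' : r' = p := by
            rcases hmem r' (by simp) with h | h
            · exact h
            · exact absurd (by rw [h])
                (List.isChain_cons_cons.mp (List.isChain_cons_cons.mp hch).2).1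
          rw [hr'] at hch hl hmem ⊢
          have hch2 : List.Chain' (fun u v : Fin 2 × Bool => u.1 ≠ v.1) (p :: T'') :=
            (List.isChain_cons_cons.mp (List.isChain_cons_cons.mp hch).2).2
          have hlast := hl
          rw [List.getLast?_cons_cons, List.getLast?_cons_cons] at hlast
          obtain ⟨k, hk⟩ := IHn (p :: T'') p q (by simp at hn ⊢; omega) hpq
            (fun x hx => hmem x (by simp at hx ⊢; tauto)) hch2 (by simp) hlast
          exact ⟨k + 1, by rw [show rep p q (k + 1) = p :: q :: rep p q k from rfl, ← hk]⟩

lemma good_all : ∀ (n : ℕ) (L : List (Fin 2 × Bool)), L.length ≤ n → Good K L := by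
  intro n
  induction n with
  | zero =>
    intro L h
    rw [List.length_eq_zero_iff.mp (Nat.le_zero.mp h)]
    exact good_nil
  | succ n IH =>
    intro L hL
    match L with
    | [] => exact good_nil
    | [p] => exact good_single p
    | p0 :: p1 :: T =>
      set L := p0 :: p1 :: T with hLdef
      by_cases hmix : ∃ (i : Fin 2) (s : Bool), (i, s) ∈ L ∧ (i, !s) ∈ L
      · obtain ⟨i, s, h1, h2⟩ := hmix
        obtain ⟨A0, B0, hAB0⟩ := List.append_of_mem h1
        rw [hAB0]
        apply good_rot ((i, s) :: B0) A0
        have hmem2 : (i, !s) ∈ B0 ++ A0 := by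
          rw [hAB0] at h2
          rw [List.mem_append] at h2 ⊢
          rcases h2 with h | h
          · right; exact h
          · rcases List.mem_cons.mp h with h | h
            · exfalso; cases s <;> simp_all
            · left; exact h
        obtain ⟨A, B, hAB⟩ := List.append_of_mem hmem2
        rw [show ((i, s) :: B0) ++ A0 = (i, s) :: (B0 ++ A0) from rfl, hAB]
        apply good_mixed
        intro L' hL'
        apply IH
        have hlen0 : L.length = A0.length + B0.length + 1 := by
          rw [hAB0]; simp only [List.length_append, List.length_cons]; omega
        have hlen : (B0 ++ A0).length = A.length + B.length + 1 := by
          rw [hAB]; simp only [List.length_append, List.length_cons]; omega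
        simp at hlen
        simp [hLdef] at hL hlen0
        omega
      · push_neg at hmix
        rcases chain_or (fun u v : Fin 2 × Bool => u.1 ≠ v.1) L with hch | ⟨A, u, v, B, heq, hn⟩
        · -- alternating case
          have hne : L ≠ [] := by simp [hLdef]
          set p := L.head hne with hpdef
          set q := L.getLast hne with hqdef
          have hpm : p ∈ L := List.head_mem hne
          have hqm : q ∈ L := List.getLast_mem hne
          have same_of_gen : ∀ r ∈ L, ∀ r' ∈ L, r.1 = r'.1 → r = r' := by
            intro r hrm r' hrm' hgen
            obtain ⟨g, t⟩ := r
            obtain ⟨g', t'⟩ := r'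
            simp at hgen
            subst hgen
            by_cases hts : t = t'
            · rw [hts]
            · exfalso
              have : t' = !t := by cases t <;> cases t' <;> simp_all
              rw [this] at hrm'
              exact hmix g t hrm hrm'
          by_cases hhl : p.1 = q.1
          · -- head and last have same generator: they are equal; rotate by one
            have hpq : q = p := same_of_gen q hqm p hpm hhl.symm
            have hdl : L.dropLast ++ [q] = L := by
              rw [hqdef]; exact List.dropLast_append_getLast hne
            rw [← hdl]
            apply good_rot [q] L.dropLast
            have hdrop : L.dropLast = p0 :: (p1 :: T).dropLast := by
              simp [hLdef]
            have hp0 : p = p0 := by simp [hpdef, hLdef]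
            rw [show [q] ++ L.dropLast = q :: L.dropLast from rfl, hdrop, hpq, hp0]
            apply good_sq
            intro L' hL'
            apply IH
            have : (p1 :: T).dropLast.length = T.length := by simp
            simp [hLdef] at hL
            omega
          · -- strictly alternating: power word
            have hall : ∀ r ∈ L, r = p ∨ r = q := by
              intro r hrm
              have : r.1 = p.1 ∨ r.1 = q.1 := by omega
              rcases this with h | h
              · left; exact same_of_gen r hrm p hpm h
              · right; exact same_of_gen r hrm q hqm h
            obtain ⟨k, hk⟩ := alt_struct (n + 1) L p q hL hhl hall hch
              (by rw [hpdef, List.head?_eq_head]) (by rw [hqdef, List.getLast?_eq_getLast_of_ne_nil])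
            rw [hk]
            exact good_rep p q k
        · -- adjacent pair with the same generator
          push_neg at hn
          have hum : u ∈ L := by rw [heq]; simp
          have hvm : v ∈ L := by rw [heq]; simp
          have huv : v = u := by
            obtain ⟨g, t⟩ := u
            obtain ⟨g', t'⟩ := v
            simp at hn
            subst hn
            by_cases hts : t' = t
            · rw [hts]
            · exfalso
              have : t' = !t := by cases t <;> cases t' <;> simp_all
              rw [this] at hvm
              exact hmix g t hum hvm
          rw [huv] at heq
          rw [heq]
          apply good_rot (u :: u :: B) A
          rw [show (u :: u :: B) ++ A = u :: u :: (B ++ A) from rfl]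
          apply good_sq
          intro L' hL'
          apply IH
          have hlen := congrArg List.length heq
          simp only [hLdef, List.length_append, List.length_cons] at hlen hL
          simp only [List.length_append, List.length_cons] at hL'
          omega

lemma good_any (L : List (Fin 2 × Bool)) : Good K L := good_all L.length L le_rfl

end TraceSwapAux

theorem trace_swap_of_trace_eq (K : Type) [Field K] (a b : SL(2, K))
    (hab : Matrix.trace (a : Matrix (Fin 2) (Fin 2) K)
      = Matrix.trace (b : Matrix (Fin 2) (Fin 2) K))
    (w : FreeGroup (Fin 2)) :
    Matrix.trace ((FreeGroup.lift ![a, b] w : SL(2, K)) : Matrix (Fin 2) (Fin 2) K)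
      = Matrix.trace ((FreeGroup.lift ![b, a] w : SL(2, K)) : Matrix (Fin 2) (Fin 2) K) := by
  obtain ⟨f, hf⟩ := TraceSwapAux.good_any (K := K) w.toWord
  have key : ∀ c d : SL(2,K), (FreeGroup.lift ![c, d] w : SL(2, K))
      = TraceSwapAux.P c d w.toWord := by
    intro c d
    conv_lhs => rw [← FreeGroup.mk_toWord (x := w)]
    rw [FreeGroup.lift_mk]
    rfl
  rw [key a b, key b a]
  have h1 := hf a b
  have h2 := hf b a
  show TraceSwapAux.tr _ = TraceSwapAux.tr _
  rw [h1, h2]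
  rw [show TraceSwapAux.tr a = TraceSwapAux.tr b from hab]
  rw [TraceSwapAux.tr_mul_comm b a]
end

section
/- For every element w of the free group on two generators x, y there exists an integer polynomial P in three variables such that for every field K and all a, b ∈ SL(2,K), tr w(a,b) = P(tr a, tr b, tr(a·b)). -/
open Matrix MatrixGroups

section MatLemmas
variable {R : Type*} [CommRing R]

lemma trBA (A B : Matrix (Fin 2) (Fin 2) R) :
    B * A = (Matrix.trace (A * B) - Matrix.trace A * Matrix.trace B) • (1 : Matrix (Fin 2) (Fin 2) R)
      + Matrix.trace B • A + Matrix.trace A • B - A * B := by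
  ext i j
  fin_cases i <;> fin_cases j <;>
    simp [Matrix.mul_apply, Fin.sum_univ_two, Matrix.trace_fin_two, Matrix.one_apply] <;> ring

variable {A B : Matrix (Fin 2) (Fin 2) R} (hA : A.det = 1) (hB : B.det = 1)

include hA in
lemma trAA : A * A = Matrix.trace A • A - 1 := by
  rw [Matrix.det_fin_two] at hA
  ext i j
  fin_cases i <;> fin_cases j <;>
    simp [Matrix.mul_apply, Fin.sum_univ_two, Matrix.trace_fin_two, Matrix.one_apply]
  · linear_combination -hA
  · ring
  · ring
  · linear_combination -hA

include hB in
lemma trBB : B * B = Matrix.trace B • B - 1 := by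
  rw [Matrix.det_fin_two] at hB
  ext i j
  fin_cases i <;> fin_cases j <;>
    simp [Matrix.mul_apply, Fin.sum_univ_two, Matrix.trace_fin_two, Matrix.one_apply]
  · linear_combination -hB
  · ring
  · ring
  · linear_combination -hB

include hA in
lemma trAC : A * (A * B) = Matrix.trace A • (A * B) - B := by
  rw [Matrix.det_fin_two] at hA
  ext i j
  fin_cases i <;> fin_cases j <;>
    simp [Matrix.mul_apply, Fin.sum_univ_two, Matrix.trace_fin_two, Matrix.one_apply]
  · linear_combination (-(B 0 0)) * hA
  · linear_combination (-(B 0 1)) * hA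
  · linear_combination (-(B 1 0)) * hA
  · linear_combination (-(B 1 1)) * hA

include hB in
lemma trBC : B * (A * B) = A + Matrix.trace (A * B) • B - Matrix.trace A • (1 : Matrix (Fin 2) (Fin 2) R) := by
  rw [Matrix.det_fin_two] at hB
  ext i j
  fin_cases i <;> fin_cases j <;>
    simp [Matrix.mul_apply, Fin.sum_univ_two, Matrix.trace_fin_two, Matrix.one_apply]
  · linear_combination (A 0 0 - (A 0 0 + A 1 1)) * hB
  · linear_combination (A 0 1) * hB
  · linear_combination (A 1 0) * hB
  · linear_combination (A 1 1 - (A 0 0 + A 1 1)) * hB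

include hA in
lemma trCA : (A * B) * A = Matrix.trace (A * B) • A + B - Matrix.trace B • (1 : Matrix (Fin 2) (Fin 2) R) := by
  rw [Matrix.det_fin_two] at hA
  ext i j
  fin_cases i <;> fin_cases j <;>
    simp [Matrix.mul_apply, Fin.sum_univ_two, Matrix.trace_fin_two, Matrix.one_apply]
  · linear_combination (B 0 0 - (B 0 0 + B 1 1)) * hA
  · linear_combination (B 0 1) * hA
  · linear_combination (B 1 0) * hA
  · linear_combination (B 1 1 - (B 0 0 + B 1 1)) * hA

include hB in
lemma trCB : (A * B) * B = Matrix.trace B • (A * B) - A := by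
  rw [Matrix.det_fin_two] at hB
  ext i j
  fin_cases i <;> fin_cases j <;>
    simp [Matrix.mul_apply, Fin.sum_univ_two, Matrix.trace_fin_two, Matrix.one_apply]
  · linear_combination (-(A 0 0)) * hB
  · linear_combination (-(A 0 1)) * hB
  · linear_combination (-(A 1 0)) * hB
  · linear_combination (-(A 1 1)) * hB

include hA hB in
lemma trCC : (A * B) * (A * B) = Matrix.trace (A * B) • (A * B) - 1 := by
  rw [Matrix.det_fin_two] at hA hB
  ext i j
  fin_cases i <;> fin_cases j <;>
    simp [Matrix.mul_apply, Fin.sum_univ_two, Matrix.trace_fin_two, Matrix.one_apply]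
  · linear_combination (-hA) + (-(A 0 0 * A 1 1 - A 0 1 * A 1 0)) * hB
  · ring
  · ring
  · linear_combination (-hA) + (-(A 0 0 * A 1 1 - A 0 1 * A 1 0)) * hB

end MatLemmas

section Combo
variable {R : Type*} [CommRing R]

lemma combo_mul {A B : Matrix (Fin 2) (Fin 2) R} (hA : A.det = 1) (hB : B.det = 1)
    (p0 p1 p2 p3 q0 q1 q2 q3 : R) :
    (p0 • (1 : Matrix (Fin 2) (Fin 2) R) + p1 • A + p2 • B + p3 • (A * B)) *
      (q0 • (1 : Matrix (Fin 2) (Fin 2) R) + q1 • A + q2 • B + q3 • (A * B)) =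
    (p0 * q0 - p1 * q1 + (Matrix.trace (A * B) - Matrix.trace A * Matrix.trace B) * (p2 * q1)
        - p2 * q2 - Matrix.trace A * (p2 * q3) - Matrix.trace B * (p3 * q1) - p3 * q3) • 1
      + (p0 * q1 + p1 * q0 + Matrix.trace A * (p1 * q1) + Matrix.trace B * (p2 * q1)
        + p2 * q3 + Matrix.trace (A * B) * (p3 * q1) - p3 * q2) • A
      + (p0 * q2 + p2 * q0 + Matrix.trace A * (p2 * q1) + Matrix.trace B * (p2 * q2)
        + Matrix.trace (A * B) * (p2 * q3) - p1 * q3 + p3 * q1) • B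
      + (p0 * q3 + p3 * q0 + p1 * q2 + Matrix.trace A * (p1 * q3) - p2 * q1
        + Matrix.trace B * (p3 * q2) + Matrix.trace (A * B) * (p3 * q3)) • (A * B) := by
  simp only [add_mul, mul_add, smul_mul_assoc, mul_smul_comm, smul_smul, one_mul, mul_one]
  rw [trAA hA, trBB hB, trBA A B, trAC hA, trBC hB, trCA hA, trCB hB, trCC hA hB]
  module

end Combo


section SL2
variable {K : Type} [Field K]

lemma sl2_inv_coe (a : SL(2, K)) :
    ((a⁻¹ : SL(2, K)) : Matrix (Fin 2) (Fin 2) K)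
      = Matrix.trace ((a : SL(2, K)) : Matrix (Fin 2) (Fin 2) K) • 1
        - ((a : SL(2, K)) : Matrix (Fin 2) (Fin 2) K) := by
  rw [Matrix.SpecialLinearGroup.coe_inv, Matrix.adjugate_fin_two]
  ext i j
  fin_cases i <;> fin_cases j <;>
    simp [Matrix.trace_fin_two, Matrix.one_apply]

/-- evaluation of a polynomial at the three traces -/
private noncomputable def evP (a b : SL(2, K)) (Q : MvPolynomial (Fin 3) ℤ) : K :=
  MvPolynomial.aeval
    ![Matrix.trace ((a : SL(2, K)) : Matrix (Fin 2) (Fin 2) K),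
      Matrix.trace ((b : SL(2, K)) : Matrix (Fin 2) (Fin 2) K),
      Matrix.trace (((a : SL(2, K)) : Matrix (Fin 2) (Fin 2) K)
        * ((b : SL(2, K)) : Matrix (Fin 2) (Fin 2) K))] Q

end SL2

private def GoodW (w : FreeGroup (Fin 2)) : Prop :=
  ∃ P : Fin 4 → MvPolynomial (Fin 3) ℤ,
    ∀ (K : Type) [Field K], ∀ a b : SL(2, K),
      ((FreeGroup.lift ![a, b] w : SL(2, K)) : Matrix (Fin 2) (Fin 2) K)
        = evP a b (P 0) • 1 + evP a b (P 1) • (a : Matrix (Fin 2) (Fin 2) K)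
          + evP a b (P 2) • (b : Matrix (Fin 2) (Fin 2) K)
          + evP a b (P 3) • ((a : Matrix (Fin 2) (Fin 2) K) * (b : Matrix (Fin 2) (Fin 2) K))

open MvPolynomial in
private lemma goodW (w : FreeGroup (Fin 2)) : GoodW w := by
  induction w with
  | C1 =>
    refine ⟨![1, 0, 0, 0], fun K _ a b => ?_⟩
    simp [evP]
  | of i =>
    fin_cases i
    · show GoodW (pure (0 : Fin 2))
      refine ⟨![0, 1, 0, 0], fun K _ a b => ?_⟩
      have h : FreeGroup.lift ![a, b] (pure (0 : Fin 2)) = a := FreeGroup.lift_apply_of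
      simp [h, evP]
    · show GoodW (pure (1 : Fin 2))
      refine ⟨![0, 0, 1, 0], fun K _ a b => ?_⟩
      have h : FreeGroup.lift ![a, b] (pure (1 : Fin 2)) = b := FreeGroup.lift_apply_of
      simp [h, evP]
  | inv_of i _ =>
    fin_cases i
    · show GoodW (pure (0 : Fin 2))⁻¹
      refine ⟨![X 0, -1, 0, 0], fun K _ a b => ?_⟩
      have h : FreeGroup.lift ![a, b] ((pure (0 : Fin 2))⁻¹) = a⁻¹ := by
        rw [map_inv]; congr 1; exact FreeGroup.lift_apply_of
      rw [h, sl2_inv_coe]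
      simp [evP]
      module
    · show GoodW (pure (1 : Fin 2))⁻¹
      refine ⟨![X 1, 0, -1, 0], fun K _ a b => ?_⟩
      have h : FreeGroup.lift ![a, b] ((pure (1 : Fin 2))⁻¹) = b⁻¹ := by
        rw [map_inv]; congr 1; exact FreeGroup.lift_apply_of
      rw [h, sl2_inv_coe]
      simp [evP]
      module
  | mul u v hu hv =>
    obtain ⟨P, hP⟩ := hu
    obtain ⟨Q, hQ⟩ := hv
    refine ⟨![P 0 * Q 0 - P 1 * Q 1 + (X 2 - X 0 * X 1) * (P 2 * Q 1) - P 2 * Q 2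
        - X 0 * (P 2 * Q 3) - X 1 * (P 3 * Q 1) - P 3 * Q 3,
      P 0 * Q 1 + P 1 * Q 0 + X 0 * (P 1 * Q 1) + X 1 * (P 2 * Q 1) + P 2 * Q 3
        + X 2 * (P 3 * Q 1) - P 3 * Q 2,
      P 0 * Q 2 + P 2 * Q 0 + X 0 * (P 2 * Q 1) + X 1 * (P 2 * Q 2)
        + X 2 * (P 2 * Q 3) - P 1 * Q 3 + P 3 * Q 1,
      P 0 * Q 3 + P 3 * Q 0 + P 1 * Q 2 + X 0 * (P 1 * Q 3) - P 2 * Q 1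
        + X 1 * (P 3 * Q 2) + X 2 * (P 3 * Q 3)], fun K _ a b => ?_⟩
    have hm : ((FreeGroup.lift ![a, b] (u * v) : SL(2, K)) : Matrix (Fin 2) (Fin 2) K)
        = ((FreeGroup.lift ![a, b] u : SL(2, K)) : Matrix (Fin 2) (Fin 2) K)
          * ((FreeGroup.lift ![a, b] v : SL(2, K)) : Matrix (Fin 2) (Fin 2) K) := by
      rw [_root_.map_mul]; rfl
    rw [hm, hP K a b, hQ K a b,
      combo_mul (A := ((a : SL(2, K)) : Matrix (Fin 2) (Fin 2) K))
        (B := ((b : SL(2, K)) : Matrix (Fin 2) (Fin 2) K)) a.2 b.2]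
    simp only [evP, Matrix.cons_val_zero, Matrix.cons_val_one, Matrix.head_cons,
      Matrix.cons_val_two, Matrix.tail_cons, Matrix.cons_val_three, _root_.map_add,
      _root_.map_sub, _root_.map_mul, MvPolynomial.aeval_X, Matrix.cons_val_fin_one]

open MvPolynomial in
theorem exists_trace_polynomial (w : FreeGroup (Fin 2)) :
    ∃ P : MvPolynomial (Fin 3) ℤ,
      ∀ (K : Type) [Field K], ∀ a b : SL(2, K),
        Matrix.trace ((FreeGroup.lift ![a, b] w : SL(2, K)) : Matrix (Fin 2) (Fin 2) K)
          = MvPolynomial.aeval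
              ![Matrix.trace ((a : SL(2, K)) : Matrix (Fin 2) (Fin 2) K),
                Matrix.trace ((b : SL(2, K)) : Matrix (Fin 2) (Fin 2) K),
                Matrix.trace ((a * b : SL(2, K)) : Matrix (Fin 2) (Fin 2) K)] P := by
  obtain ⟨P, hP⟩ := goodW w
  refine ⟨2 * P 0 + X 0 * P 1 + X 1 * P 2 + X 2 * P 3, fun K _ a b => ?_⟩
  have hab : ((a * b : SL(2, K)) : Matrix (Fin 2) (Fin 2) K)
      = ((a : SL(2, K)) : Matrix (Fin 2) (Fin 2) K)
        * ((b : SL(2, K)) : Matrix (Fin 2) (Fin 2) K) := rfl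
  rw [hP K a b, hab]
  simp only [evP, Matrix.trace_add, Matrix.trace_smul, Matrix.trace_one,
    Matrix.cons_val_zero, Matrix.cons_val_one, Matrix.head_cons, Matrix.cons_val_two,
    Matrix.tail_cons, _root_.map_add, _root_.map_mul, _root_.map_ofNat,
    MvPolynomial.aeval_X, Fintype.card_fin, Nat.cast_ofNat, smul_eq_mul]
  ring
end

section
/- Let p be a prime with p > 30, and in SL(2, ℤ/pℤ) let a be the matrix with rows (2, 1) and (0, 2⁻¹) and b the matrix with rows (2, 0) and (0, 2⁻¹). Then (a^p · b⁻¹)^(p−4) · a · (a^p · b⁻¹) · a⁻¹ = 1, while a · (a^p · b⁻¹)^(p−4) · a⁻¹ · (a^p · b⁻¹) equals the matrix with rows (1, −30) and (0, 1), which is not the identity. -/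
open Matrix MatrixGroups

section Aux

variable {K : Type*} [CommRing K]

def myU (x : K) : SL(2, K) :=
  ⟨!![1, x; 0, 1], by simp [Matrix.det_fin_two_of]⟩

@[simp] lemma myU_coe (x : K) :
    ((myU x : SL(2, K)) : Matrix (Fin 2) (Fin 2) K) = !![1, x; 0, 1] := rfl

lemma myU_mul (x y : K) : myU x * myU y = myU (x + y) := by
  apply Subtype.ext
  simp [Matrix.SpecialLinearGroup.coe_mul, Matrix.mul_fin_two, add_comm]

lemma myU_pow (x : K) (n : ℕ) : (myU x) ^ n = myU (n * x) := by
  induction n with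
  | zero =>
    rw [pow_zero]
    apply Subtype.ext
    simp [myU, Matrix.one_fin_two]
  | succ n ih =>
    rw [pow_succ, ih, myU_mul]
    push_cast
    ring_nf

lemma myU_one : (myU (0 : K)) = 1 := by
  apply Subtype.ext
  simp [myU, Matrix.one_fin_two]

lemma diag_pow (x y : K) (n : ℕ) :
    (!![x, 0; 0, y] : Matrix (Fin 2) (Fin 2) K) ^ n = !![x ^ n, 0; 0, y ^ n] := by
  induction n with
  | zero => simp [Matrix.one_fin_two]
  | succ n ih => rw [pow_succ, ih, Matrix.mul_fin_two]; simp [pow_succ]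

end Aux

theorem words_distinguished_mod_p (p : ℕ) [Fact p.Prime] (hp : 30 < p)
    (a b : SL(2, ZMod p))
    (ha : (a : Matrix (Fin 2) (Fin 2) (ZMod p)) = !![2, 1; 0, 2⁻¹])
    (hb : (b : Matrix (Fin 2) (Fin 2) (ZMod p)) = !![2, 0; 0, 2⁻¹]) :
    (a ^ p * b⁻¹) ^ (p - 4) * a * (a ^ p * b⁻¹) * a⁻¹ = 1 ∧
    ((a * (a ^ p * b⁻¹) ^ (p - 4) * a⁻¹ * (a ^ p * b⁻¹) : SL(2, ZMod p)) :
        Matrix (Fin 2) (Fin 2) (ZMod p)) = !![1, -30; 0, 1] ∧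
    a * (a ^ p * b⁻¹) ^ (p - 4) * a⁻¹ * (a ^ p * b⁻¹) ≠ 1 := by
  have hprime := (Fact.out : p.Prime)
  have hnz : ∀ n : ℕ, 0 < n → n < p → ((n : ZMod p) ≠ 0) := by
    intro n hn hnp hc
    rw [ZMod.natCast_eq_zero_iff] at hc
    exact absurd (Nat.le_of_dvd hn hc) (not_le.2 hnp)
  have h2 : (2 : ZMod p) ≠ 0 := by
    have := hnz 2 (by norm_num) (by omega); exact_mod_cast this
  have h3 : (3 : ZMod p) ≠ 0 := by
    have := hnz 3 (by norm_num) (by omega); exact_mod_cast this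
  have h30 : (30 : ZMod p) ≠ 0 := by
    have := hnz 30 (by norm_num) (by omega); exact_mod_cast this
  have hainv : ((a⁻¹ : SL(2, ZMod p)) : Matrix (Fin 2) (Fin 2) (ZMod p))
      = !![2⁻¹, -1; 0, 2] := by
    rw [Matrix.SpecialLinearGroup.coe_inv, ha, Matrix.adjugate_fin_two]
    norm_num
  have hbinv : ((b⁻¹ : SL(2, ZMod p)) : Matrix (Fin 2) (Fin 2) (ZMod p))
      = !![2⁻¹, 0; 0, 2] := by
    rw [Matrix.SpecialLinearGroup.coe_inv, hb, Matrix.adjugate_fin_two]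
    norm_num
  set c : ZMod p := 2 * 3⁻¹ with hc
  have hconj : myU c * a = b * myU c := by
    apply Subtype.ext
    rw [Matrix.SpecialLinearGroup.coe_mul, Matrix.SpecialLinearGroup.coe_mul,
      myU_coe, ha, hb, Matrix.mul_fin_two, Matrix.mul_fin_two]
    ext i j
    fin_cases i <;> fin_cases j <;> (try simp) <;>
      (try field_simp [h2, h3]) <;> (try ring) <;>
      (try linear_combination (-2 : ZMod p) * inv_mul_cancel₀ h3)
  have hbp : b ^ p = b := by
    apply Subtype.ext
    rw [Matrix.SpecialLinearGroup.coe_pow, hb, diag_pow, ZMod.pow_card,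
      ZMod.pow_card]
  have hap : a ^ p = a := by
    have ha' : a = (myU c)⁻¹ * b * ((myU c)⁻¹)⁻¹ := by
      rw [inv_inv, mul_assoc, eq_inv_mul_iff_mul_eq, hconj]
    rw [ha', conj_pow, hbp]
  have hw : a ^ p * b⁻¹ = myU 2 := by
    rw [hap]
    apply Subtype.ext
    rw [Matrix.SpecialLinearGroup.coe_mul, ha, hbinv, myU_coe, Matrix.mul_fin_two]
    ext i j
    fin_cases i <;> fin_cases j <;> (try simp) <;> (try field_simp [h2, h3]) <;> (try ring)
  have hcast : ((p - 4 : ℕ) : ZMod p) = -4 := by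
    rw [Nat.cast_sub (by omega : 4 ≤ p), ZMod.natCast_self]
    push_cast; ring
  have hpow : (myU (2 : ZMod p)) ^ (p - 4) = myU (-8) := by
    rw [myU_pow, hcast]; norm_num
  have hconj_a : ∀ x : ZMod p, a * myU x * a⁻¹ = myU (4 * x) := by
    intro x
    apply Subtype.ext
    rw [Matrix.SpecialLinearGroup.coe_mul, Matrix.SpecialLinearGroup.coe_mul,
      myU_coe, ha, hainv, myU_coe, Matrix.mul_fin_two, Matrix.mul_fin_two]
    ext i j
    fin_cases i <;> fin_cases j <;> (try simp) <;> (try field_simp [h2, h3]) <;> (try ring)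
  rw [hw, hpow]
  have key2 : a * myU (-8) * a⁻¹ * myU (2 : ZMod p) = myU (-30) := by
    rw [hconj_a (-8), myU_mul, show (4 : ZMod p) * -8 + 2 = -30 by ring]
  refine ⟨?_, ?_, ?_⟩
  · have e1 : myU ((-8 : ZMod p)) * a * myU 2 * a⁻¹
        = myU (-8) * (a * myU 2 * a⁻¹) := by group
    rw [e1, hconj_a 2, myU_mul, show (-8 : ZMod p) + 4 * 2 = 0 by ring, myU_one]
  · rw [key2, myU_coe]
  · rw [key2]
    intro hcon
    have := congrArg (fun m : SL(2, ZMod p) =>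
      (m : Matrix (Fin 2) (Fin 2) (ZMod p)) 0 1) hcon
    simp [myU_coe, Matrix.SpecialLinearGroup.coe_one] at this
    exact h30 this
end
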